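/- For the star K_{1,n-1} on n vertices, the number of subtrees is f(K_{1,n-1}) = 2^{n-1} + n - 1, and for every tree T on n vertices, f(T) ≤ 2^{n-1} + n - 1, with equality if and only if T is the star. -/

import Mathlib

open SimpleGraph

/-- The total number of subtrees of `G`: nonempty connected induced sub-vertex-sets. -/
noncomputable def numSubtrees {V : Type*} [Fintype V] (G : SimpleGraph V) : ℕ :=
  Set.ncard {s : Set V | s.Nonempty ∧ (G.induce s).Connected}

/-- `G` is a star with center `c` (`K_{1,n-1}`): the edges are exactly those
joining `c` to the other vertices. -/
def IsStar {V : Type*} (G : SimpleGraph V) (c : V) : Prop :=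
  ∀ v w : V, G.Adj v w ↔ v ≠ w ∧ (v = c ∨ w = c)

/-!
A subtree with at least two vertices is determined by the set of tree edges it spans, a nonempty
subset of the `n - 1` edges; with the `n` single vertices this gives `f(T) ≤ n + 2^(n-1) - 1`.
Equality forces every pair of edges to span a subtree. A connected graph with two edges has at most
three vertices, so any two edges of `T` meet, and an acyclic graph whose edges pairwise meet is a
star.
-/

lemma Set.ncard_setOf_subset_nonempty {α : Type*} (t : Set α) (ht : t.Finite := by toFinite_tac) :
    {F | F ⊆ t ∧ F.Nonempty}.ncard = 2 ^ t.ncard - 1 := by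
  have : {F | F ⊆ t ∧ F.Nonempty} = 𝒫 t \ {∅} := by
    ext F
    simp [Set.nonempty_iff_ne_empty]
  rw [this, Set.ncard_sdiff_singleton_of_mem (Set.empty_subset t), Set.ncard_powerset t ht]

lemma Set.ncard_setOf_mem {α : Type*} [Finite α] (c : α) :
    {s : Set α | c ∈ s}.ncard = 2 ^ (Nat.card α - 1) := by
  have : {s : Set α | c ∈ s} = compl '' 𝒫 {c}ᶜ := by
    ext s
    simp only [Set.mem_ofPred_eq, Set.mem_image, Set.mem_powerset_iff,
      Set.subset_compl_singleton_iff]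
    exact ⟨fun hc => ⟨sᶜ, not_not_intro hc, compl_compl s⟩, by rintro ⟨t, ht, rfl⟩; exact ht⟩
  rw [this, Set.ncard_image_of_injective _ compl_injective, Set.ncard_powerset,
    Set.ncard_compl, Set.ncard_singleton]

lemma Set.ncard_setOf_nontrivial_mem {α : Type*} [Finite α] (c : α) :
    {s : Set α | s.Nontrivial ∧ c ∈ s}.ncard = 2 ^ (Nat.card α - 1) - 1 := by
  have : {s : Set α | s.Nontrivial ∧ c ∈ s} = {s | c ∈ s} \ {{c}} := by
    ext s
    simp only [Set.mem_ofPred_eq, Set.mem_sdiff, Set.mem_singleton_iff]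
    exact ⟨fun ⟨hs, hc⟩ => ⟨hc, (Set.nontrivial_iff_ne_singleton hc).mp hs⟩,
      fun ⟨hc, hs⟩ => ⟨(Set.nontrivial_iff_ne_singleton hc).mpr hs, hc⟩⟩
  rw [this, Set.ncard_sdiff_singleton_of_mem (s := {s : Set α | c ∈ s}) (a := {c})
    (Set.mem_singleton c), Set.ncard_setOf_mem]

namespace SimpleGraph

variable {V : Type*} {G : SimpleGraph V}

def nontrivialSubtrees (G : SimpleGraph V) : Set (Set V) :=
  {s | s.Nontrivial ∧ (G.induce s).Connected}

lemma numSubtrees_eq_card_add_ncard_nontrivialSubtrees [Fintype V] (G : SimpleGraph V) :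
    numSubtrees G = Fintype.card V + G.nontrivialSubtrees.ncard := by
  have hsplit : {s : Set V | s.Nonempty ∧ (G.induce s).Connected} =
      Set.range ({·}) ∪ G.nontrivialSubtrees := by
    ext s
    simp only [Set.mem_ofPred_eq, Set.mem_union, Set.mem_range, nontrivialSubtrees]
    refine ⟨fun ⟨⟨v, hv⟩, hconn⟩ => ?_, ?_⟩
    · rcases s.subsingleton_or_nontrivial with hs | hs
      exacts [Or.inl ⟨v, (hs.eq_singleton_of_mem hv).symm⟩, Or.inr ⟨hs, hconn⟩]
    · rintro (⟨v, rfl⟩ | ⟨hs, hconn⟩)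
      exacts [⟨Set.singleton_nonempty v, by simp⟩, ⟨hs.nonempty, hconn⟩]
  have hdisj : Disjoint (Set.range ({·} : V → Set V)) G.nontrivialSubtrees :=
    Set.disjoint_left.mpr fun _ ⟨v, hv⟩ hs => Set.not_nontrivial_singleton (hv ▸ hs.1)
  rw [numSubtrees, hsplit, Set.ncard_union_eq hdisj,
    Set.ncard_range_of_injective Set.singleton_injective, Nat.card_eq_fintype_card]

lemma IsTree.ncard_edgeSet_add_one [Fintype V] (hG : G.IsTree) :
    G.edgeSet.ncard + 1 = Fintype.card V := by
  classical
  rw [← hG.card_edgeFinset, ← Set.ncard_coe_finset, coe_edgeFinset]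

lemma exists_adj_of_induce_connected {s : Set V} (hconn : (G.induce s).Connected)
    (hs : s.Nontrivial) {v : V} (hv : v ∈ s) : ∃ u ∈ s, G.Adj v u := by
  have := hs.coe_sort
  obtain ⟨u, hu⟩ := hconn.preconnected.exists_adj_of_nontrivial ⟨v, hv⟩
  exact ⟨u, u.2, hu⟩

lemma mem_iff_exists_edge_of_mem_nontrivialSubtrees {s : Set V}
    (hs : s ∈ G.nontrivialSubtrees) {v : V} :
    v ∈ s ↔ ∃ e ∈ G.edgeSet ∩ s.sym2, v ∈ e := by
  refine ⟨fun hv => ?_, fun ⟨e, ⟨_, hes⟩, hve⟩ => Set.mem_sym2_iff_subset.mp hes hve⟩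
  obtain ⟨u, hu, hvu⟩ := exists_adj_of_induce_connected hs.2 hs.1 hv
  exact ⟨s(v, u), ⟨hvu, hv, hu⟩, Sym2.mem_mk_left v u⟩

lemma injOn_edgeSet_inter_sym2 :
    Set.InjOn (fun s : Set V => G.edgeSet ∩ s.sym2) G.nontrivialSubtrees := by
  intro s hs t ht (hst : G.edgeSet ∩ s.sym2 = G.edgeSet ∩ t.sym2)
  ext v
  rw [mem_iff_exists_edge_of_mem_nontrivialSubtrees hs,
    mem_iff_exists_edge_of_mem_nontrivialSubtrees ht, hst]

lemma mapsTo_edgeSet_inter_sym2 :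
    Set.MapsTo (fun s : Set V => G.edgeSet ∩ s.sym2) G.nontrivialSubtrees
      {F | F ⊆ G.edgeSet ∧ F.Nonempty} := by
  intro s hs
  obtain ⟨v, hv⟩ := hs.1.nonempty
  obtain ⟨e, he, -⟩ := (mem_iff_exists_edge_of_mem_nontrivialSubtrees hs).mp hv
  exact ⟨Set.inter_subset_left, e, he⟩

lemma ncard_le_ncard_edgeSet_inter_sym2_add_one [Finite V] {s : Set V}
    (hconn : (G.induce s).Connected) : s.ncard ≤ (G.edgeSet ∩ s.sym2).ncard + 1 := by
  have hmap : ∀ e ∈ (G.induce s).edgeSet, Sym2.map Subtype.val e ∈ G.edgeSet ∩ s.sym2 := by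
    rintro ⟨⟨x, hx⟩, ⟨y, hy⟩⟩ he
    exact ⟨he, hx, hy⟩
  calc s.ncard = Nat.card s := (Nat.card_coe_set_eq s).symm
    _ ≤ Nat.card (G.induce s).edgeSet + 1 := hconn.card_vert_le_card_edgeSet_add_one
    _ ≤ (G.edgeSet ∩ s.sym2).ncard + 1 := by
      gcongr
      rw [← Nat.card_coe_set_eq (G.edgeSet ∩ s.sym2)]
      exact Nat.card_le_card_of_injective (fun e => ⟨_, hmap e.1 e.2⟩)
        fun e f hef => Subtype.ext (Sym2.map.injective Subtype.val_injective
          (congrArg Subtype.val hef))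

lemma ncard_nontrivialSubtrees_le [Finite V] :
    G.nontrivialSubtrees.ncard ≤ 2 ^ G.edgeSet.ncard - 1 := by
  rw [← Set.ncard_setOf_subset_nonempty G.edgeSet]
  exact Set.ncard_le_ncard_of_injOn _ mapsTo_edgeSet_inter_sym2 injOn_edgeSet_inter_sym2

lemma surjOn_edgeSet_inter_sym2_of_ncard_eq [Finite V]
    (h : G.nontrivialSubtrees.ncard = 2 ^ G.edgeSet.ncard - 1) :
    Set.SurjOn (fun s : Set V => G.edgeSet ∩ s.sym2) G.nontrivialSubtrees
      {F | F ⊆ G.edgeSet ∧ F.Nonempty} := by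
  refine (Set.eq_of_subset_of_ncard_le mapsTo_edgeSet_inter_sym2.image_subset ?_).symm.subset
  rw [injOn_edgeSet_inter_sym2.ncard_image, h, Set.ncard_setOf_subset_nonempty G.edgeSet]

lemma eq_or_eq_of_adj_of_adj_of_surjOn [Finite V]
    (hsurj : Set.SurjOn (fun s : Set V => G.edgeSet ∩ s.sym2) G.nontrivialSubtrees
      {F | F ⊆ G.edgeSet ∧ F.Nonempty})
    {a b x y : V} (hab : G.Adj a b) (hxy : G.Adj x y) : a = x ∨ a = y ∨ b = x ∨ b = y := by
  by_contra! hne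
  have hF : {s(a, b), s(x, y)} ∈ {F | F ⊆ G.edgeSet ∧ F.Nonempty} :=
    ⟨Set.insert_subset_iff.mpr ⟨hab, Set.singleton_subset_iff.mpr (G.mem_edgeSet.mpr hxy)⟩,
      Set.insert_nonempty _ _⟩
  obtain ⟨s, hs, hsF : G.edgeSet ∩ s.sym2 = {s(a, b), s(x, y)}⟩ := hsurj hF
  have hab_s : s(a, b) ∈ s.sym2 := (hsF.ge (Set.mem_insert _ _)).2
  have hxy_s : s(x, y) ∈ s.sym2 := (hsF.ge (Set.mem_insert_of_mem _ rfl)).2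
  have hfour : ({a, b, x, y} : Set V).ncard = 4 := by
    rw [Set.ncard_insert_of_notMem (by simp [hab.ne, hne.1, hne.2.1]),
      Set.ncard_insert_of_notMem (by simp [hne.2.2.1, hne.2.2.2]),
      Set.ncard_pair hxy.ne]
  have hsub : ({a, b, x, y} : Set V) ⊆ s := by
    simp only [Set.insert_subset_iff, Set.singleton_subset_iff]
    exact ⟨hab_s.1, hab_s.2, hxy_s.1, hxy_s.2⟩
  have hvert := ncard_le_ncard_edgeSet_inter_sym2_add_one hs.2
  have hedge : ({s(a, b), s(x, y)} : Set (Sym2 V)).ncard ≤ 2 :=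
    (Set.ncard_insert_le _ _).trans (by rw [Set.ncard_singleton])
  have := Set.ncard_le_ncard hsub
  rw [hsF] at hvert
  omega

lemma IsAcyclic.not_adj_of_adj_of_adj (hG : G.IsAcyclic) {a b c : V} (hab : G.Adj a b)
    (hbc : G.Adj b c) : ¬G.Adj c a := fun hca => by
  refine hG (Walk.cons hab (Walk.cons hbc (Walk.cons hca Walk.nil))) ?_
  simp [Walk.cons_isCycle_iff, hab.ne, hbc.ne, hca.ne, hab.ne.symm, hca.ne.symm,
    Sym2.eq_swap]

lemma isStar_of_forall_adj (hG : G.Preconnected) {c : V}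
    (h : ∀ v w, G.Adj v w → v = c ∨ w = c) : IsStar G c := by
  have hadj : ∀ v, v ≠ c → G.Adj v c := fun v hv => by
    obtain ⟨p⟩ := hG v c
    have hsnd := p.adj_snd (p.not_nil_of_ne hv)
    rcases h _ _ hsnd with rfl | hc
    · exact absurd rfl hv
    · exact hc ▸ hsnd
  refine fun v w => ⟨fun hvw => ⟨hvw.ne, h v w hvw⟩, ?_⟩
  rintro ⟨hvw, rfl | rfl⟩
  · exact (hadj w hvw.symm).symm
  · exact hadj v hvw

lemma IsTree.exists_isStar_of_forall_adj (hG : G.IsTree)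
    (h : ∀ ⦃a b x y⦄, G.Adj a b → G.Adj x y → a = x ∨ a = y ∨ b = x ∨ b = y) :
    ∃ c, IsStar G c := by
  by_contra! hnot
  have havoid : ∀ c, ∃ v w, G.Adj v w ∧ v ≠ c ∧ w ≠ c := fun c => by
    by_contra! h'
    exact hnot c (isStar_of_forall_adj hG.connected.preconnected fun v w hvw => by tauto)
  obtain ⟨c⟩ := hG.connected.nonempty
  obtain ⟨a, b, hab, -, -⟩ := havoid c
  obtain ⟨v, w, hvw, hva, hwa⟩ := havoid a
  obtain ⟨p, q, hpq, hpb, hqb⟩ := havoid b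
  -- `vw` contains `b` and `pq` contains `a`; as `vw` and `pq` meet, the three edges form a triangle.
  have htri := @IsAcyclic.not_adj_of_adj_of_adj _ _ hG.isAcyclic
  grind [h hab hvw, h hab hpq, h hvw hpq, G.adj_symm, G.irrefl]

end SimpleGraph

lemma IsStar.nontrivialSubtrees_eq {V : Type*} {G : SimpleGraph V} {c : V} (h : IsStar G c) :
    G.nontrivialSubtrees = {s | s.Nontrivial ∧ c ∈ s} := by
  ext s
  refine ⟨fun ⟨hs, hconn⟩ => ⟨hs, ?_⟩, fun ⟨hs, hc⟩ => ⟨hs, ?_⟩⟩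
  · obtain ⟨v, hv⟩ := hs.nonempty
    obtain ⟨u, hu, hvu⟩ := exists_adj_of_induce_connected hconn hs hv
    rcases ((h v u).mp hvu).2 with rfl | rfl
    exacts [hv, hu]
  · refine (connected_iff_exists_forall_reachable _).mpr ⟨⟨c, hc⟩, fun ⟨w, hw⟩ => ?_⟩
    by_cases hwc : w = c
    · subst hwc; rfl
    · exact Adj.reachable ((h c w).mpr ⟨Ne.symm hwc, Or.inl rfl⟩)

theorem star_maximizes_subtrees_general {V : Type*} [Fintype V] (T : SimpleGraph V)
    (hT : T.IsTree) (n : ℕ) (hcard : Fintype.card V = n) :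
    (∀ c : V, IsStar T c → numSubtrees T = 2 ^ (n - 1) + n - 1) ∧
      numSubtrees T ≤ 2 ^ (n - 1) + n - 1 ∧
      (numSubtrees T = 2 ^ (n - 1) + n - 1 ↔ ∃ c : V, IsStar T c) := by
  have hcount : numSubtrees T = n + T.nontrivialSubtrees.ncard :=
    hcard ▸ numSubtrees_eq_card_add_ncard_nontrivialSubtrees T
  have hedges : T.edgeSet.ncard = n - 1 := by
    have := hT.ncard_edgeSet_add_one
    omega
  have hpow : 1 ≤ 2 ^ (n - 1) := Nat.one_le_two_pow
  have hle : T.nontrivialSubtrees.ncard ≤ 2 ^ (n - 1) - 1 :=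
    hedges ▸ T.ncard_nontrivialSubtrees_le
  have hstar : ∀ c, IsStar T c → numSubtrees T = 2 ^ (n - 1) + n - 1 := by
    intro c hc
    rw [hcount, hc.nontrivialSubtrees_eq, Set.ncard_setOf_nontrivial_mem, Nat.card_eq_fintype_card,
      hcard]
    omega
  refine ⟨hstar, by omega, fun heq => ?_, fun ⟨c, hc⟩ => hstar c hc⟩
  have hsurj := T.surjOn_edgeSet_inter_sym2_of_ncard_eq (by rw [hedges]; omega)
  exact hT.exists_isStar_of_forall_adj fun _ _ _ _ => eq_or_eq_of_adj_of_adj_of_surjOn hsurj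

/-- The star `K_{1,n-1}` on `n` vertices has
`2^(n-1) + n - 1` subtrees; every tree `T` on `n` vertices satisfies
`f(T) ≤ 2^(n-1) + n - 1`, with equality if and only if `T` is a star. -/
theorem star_maximizes_subtrees {V : Type*} [Fintype V] (T : SimpleGraph V)
    (hT : T.IsTree) (n : ℕ) (hn : 1 ≤ n) (hcard : Fintype.card V = n) :
    (∀ c : V, IsStar T c → numSubtrees T = 2 ^ (n - 1) + n - 1) ∧
      numSubtrees T ≤ 2 ^ (n - 1) + n - 1 ∧
      (numSubtrees T = 2 ^ (n - 1) + n - 1 ↔ ∃ c : V, IsStar T c) :=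
  star_maximizes_subtrees_general T hT n hcard
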